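/- Suppose there is a constant C > 0 such that max_{1≤i≤n} k_i/√m ≤ C n^{-1/2} for every n ≥ 2, and set a_n = n^{-3/8} (log n)^{-1/2} and δ_n = ((p_{(2)} + p_{(2)}² − 2p_{(3)})/m)^{1/2}. Then there exists a constant H > 0 such that for every n ≥ 2, P( | (1/(2m δ_n)) Σ_{1≤i<j≤n} (k_i k_j / m) h̄(c_i, c_j) | > a_n/2 ) ≤ H n^{-1/4} log n and P( | (1/(2m δ_n)) Σ_{i=1}^n (k_i² / m) (p_{c_i} − p_{(2)}) | > a_n/2 ) ≤ H n^{-1/4} log n. -/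

import Mathlib

/-!
Both sums are centred, and their summands are orthogonal in `L²`. For the linear sum this is
independence of the mean-zero variables `p (c i) - p₂`. For the quadratic sum it comes from the
Gram representation `h̄(x, y) = ∑ₜ (𝟙[x = t] - p t) (𝟙[y = t] - p t)`: in the product of the
kernels of two different pairs `i < j`, `i' < j'` some index occurs only once, and it carries an
independent mean-zero factor. The second moment of either sum is therefore at most the squared
sup-norm of its summands times the sum of the squared weights, and the degree bound
`k i ≤ C √m n^(-1/2)` together with `∑ k i = 2m` makes this `O(1/n)` after normalising by
`2 m δₙ`. Chebyshev's inequality at level `aₙ / 2` turns this into `O(n⁻¹ aₙ⁻²) =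
O(n^(-1/4) log n)`.
-/

open MeasureTheory ProbabilityTheory Finset Real

section Independence

variable {Ω β κ : Type*} [MeasurableSpace Ω] {μ : Measure Ω}
  [MeasurableSpace β] {X : κ → Ω → β}

lemma ProbabilityTheory.iIndepFun.integral_finset_prod_comp (hX : iIndepFun X μ)
    (mX : ∀ i, Measurable (X i)) (s : Finset κ) {g : κ → β → ℝ} (hg : ∀ i, Measurable (g i)) :
    ∫ ω, ∏ i ∈ s, g i (X i ω) ∂μ = ∏ i ∈ s, ∫ ω, g i (X i ω) ∂μ := by
  have hXs : iIndepFun (fun i : s => X i) μ := hX.precomp Subtype.val_injective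
  rw [← prod_coe_sort s, ← hXs.integral_fun_prod_comp (f := fun i : s => g i)
    (fun i => (mX i).aemeasurable) (fun i => (hg i).aestronglyMeasurable)]
  congr 1 with ω
  exact (prod_coe_sort s fun i => g i (X i ω)).symm

lemma ProbabilityTheory.iIndepFun.integral_prod_comp_fiberwise [DecidableEq κ] {ι : Type*}
    (hX : iIndepFun X μ) (mX : ∀ i, Measurable (X i))
    (s : Finset ι) (σ : ι → κ) {f : ι → β → ℝ} (hf : ∀ a, Measurable (f a)) :
    ∫ ω, ∏ a ∈ s, f a (X (σ a) ω) ∂μ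
      = ∏ r ∈ s.image σ, ∫ ω, ∏ a ∈ s with σ a = r, f a (X r ω) ∂μ := by
  rw [← hX.integral_finset_prod_comp mX _ fun r => Finset.measurable_prod _ fun a _ => hf a]
  congr 1 with ω
  rw [← prod_fiberwise_of_maps_to (fun a ha => mem_image_of_mem σ ha)]
  refine prod_congr rfl fun r _ => prod_congr rfl fun a ha => ?_
  rw [(mem_filter.1 ha).2]

lemma ProbabilityTheory.iIndepFun.integral_prod_comp_eq_zero [DecidableEq κ] {ι : Type*}
    (hX : iIndepFun X μ) (mX : ∀ i, Measurable (X i))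
    (s : Finset ι) (σ : ι → κ) {f : ι → β → ℝ} (hf : ∀ a, Measurable (f a)) {a : ι} (ha : a ∈ s)
    (hlone : ∀ b ∈ s, σ b = σ a → b = a) (hmean : ∫ ω, f a (X (σ a) ω) ∂μ = 0) :
    ∫ ω, ∏ b ∈ s, f b (X (σ b) ω) ∂μ = 0 := by
  rw [hX.integral_prod_comp_fiberwise mX s σ hf]
  refine prod_eq_zero (mem_image_of_mem σ ha) ?_
  have : (s.filter fun b => σ b = σ a) = {a} := by
    ext b; simp only [mem_filter, mem_singleton]
    exact ⟨fun h => hlone b h.1 h.2, by rintro rfl; exact ⟨ha, rfl⟩⟩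
  rw [this]
  simpa using hmean

end Independence

section OrthogonalSum

variable {Ω ι : Type*} [MeasurableSpace Ω] {μ : Measure Ω} [IsProbabilityMeasure μ]

lemma integral_sq_sum_le_of_orthogonal (s : Finset ι) (w : ι → ℝ) {Y : ι → Ω → ℝ} {B : ℝ}
    (hY : ∀ x ∈ s, Measurable (Y x)) (hYB : ∀ x ∈ s, ∀ ω, |Y x ω| ≤ B)
    (horth : ∀ x ∈ s, ∀ y ∈ s, x ≠ y → ∫ ω, Y x ω * Y y ω ∂μ = 0) :
    ∫ ω, (∑ x ∈ s, w x * Y x ω) ^ 2 ∂μ ≤ B ^ 2 * ∑ x ∈ s, w x ^ 2 := by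
  have hbd : ∀ x ∈ s, ∀ y ∈ s, ∀ ω, |Y x ω * Y y ω| ≤ B ^ 2 := fun x hx y hy ω => by
    rw [abs_mul, sq]
    exact mul_le_mul (hYB x hx ω) (hYB y hy ω) (abs_nonneg _) ((abs_nonneg _).trans (hYB x hx ω))
  have hint : ∀ x ∈ s, ∀ y ∈ s, Integrable (fun ω => w x * w y * (Y x ω * Y y ω)) μ :=
    fun x hx y hy => (Integrable.of_bound ((hY x hx).mul (hY y hy)).aestronglyMeasurable _
      (ae_of_all _ (hbd x hx y hy))).const_mul _
  have hsq : ∀ x ∈ s, ∫ ω, Y x ω * Y x ω ∂μ ≤ B ^ 2 := fun x hx =>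
    (integral_mono_of_nonneg (ae_of_all _ fun ω => mul_self_nonneg _) (integrable_const _)
      (ae_of_all _ fun ω => (le_abs_self _).trans (hbd x hx x hx ω))).trans (by simp)
  calc ∫ ω, (∑ x ∈ s, w x * Y x ω) ^ 2 ∂μ
      = ∫ ω, ∑ x ∈ s, ∑ y ∈ s, w x * w y * (Y x ω * Y y ω) ∂μ := by
        congr 1 with ω
        rw [sq, sum_mul_sum]
        exact sum_congr rfl fun x _ => sum_congr rfl fun y _ => by ring
    _ = ∑ x ∈ s, w x ^ 2 * ∫ ω, Y x ω * Y x ω ∂μ := by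
        rw [integral_finsetSum _ fun x hx => integrable_finsetSum _ (hint x hx)]
        refine sum_congr rfl fun x hx => ?_
        rw [integral_finsetSum _ (hint x hx), sum_eq_single_of_mem x hx, integral_const_mul, sq]
        intro y hy hyx
        rw [integral_const_mul, horth x hx y hy (Ne.symm hyx), mul_zero]
    _ ≤ ∑ x ∈ s, w x ^ 2 * B ^ 2 :=
        sum_le_sum fun x hx => mul_le_mul_of_nonneg_left (hsq x hx) (sq_nonneg _)
    _ = B ^ 2 * ∑ x ∈ s, w x ^ 2 := by rw [mul_sum]; exact sum_congr rfl fun x _ => mul_comm _ _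

lemma measureReal_lt_abs_le_integral_sq_div_sq {X : Ω → ℝ} (hX : Integrable (fun ω => X ω ^ 2) μ)
    {t : ℝ} (ht : 0 < t) : μ.real {ω | t < |X ω|} ≤ (∫ ω, X ω ^ 2 ∂μ) / t ^ 2 := by
  rw [le_div_iff₀ (by positivity), mul_comm]
  calc t ^ 2 * μ.real {ω | t < |X ω|} ≤ t ^ 2 * μ.real {ω | t ^ 2 ≤ X ω ^ 2} := by
        refine mul_le_mul_of_nonneg_left (measureReal_mono fun ω hω => ?_) (sq_nonneg _)
        rw [Set.mem_ofPred_eq, ← sq_abs (X ω)]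
        exact pow_le_pow_left₀ ht.le (le_of_lt hω) 2
    _ ≤ ∫ ω, X ω ^ 2 ∂μ :=
        mul_meas_ge_le_integral_of_nonneg (ae_of_all _ fun ω => sq_nonneg _) hX _

lemma measureReal_lt_abs_mul_sum_le_of_orthogonal (l : ℝ) (s : Finset ι) (w : ι → ℝ)
    {Y : ι → Ω → ℝ} {B : ℝ} (hY : ∀ x ∈ s, Measurable (Y x)) (hYB : ∀ x ∈ s, ∀ ω, |Y x ω| ≤ B)
    (horth : ∀ x ∈ s, ∀ y ∈ s, x ≠ y → ∫ ω, Y x ω * Y y ω ∂μ = 0) {t : ℝ} (ht : 0 < t) :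
    μ.real {ω | t < |l * ∑ x ∈ s, w x * Y x ω|} ≤ l ^ 2 * (B ^ 2 * ∑ x ∈ s, w x ^ 2) / t ^ 2 := by
  have hmeas : Measurable fun ω => l * ∑ x ∈ s, w x * Y x ω :=
    measurable_const.mul (Finset.measurable_sum s fun x hx => measurable_const.mul (hY x hx))
  have hbd : ∀ ω, |l * ∑ x ∈ s, w x * Y x ω| ≤ |l| * ∑ x ∈ s, |w x| * B := fun ω => by
    rw [abs_mul]
    refine mul_le_mul_of_nonneg_left ((abs_sum_le_sum_abs _ _).trans (sum_le_sum fun x hx => ?_))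
      (abs_nonneg _)
    rw [abs_mul]
    exact mul_le_mul_of_nonneg_left (hYB x hx ω) (abs_nonneg _)
  have hL2 : MemLp (fun ω => l * ∑ x ∈ s, w x * Y x ω) 2 μ :=
    MemLp.of_bound hmeas.aestronglyMeasurable _ (ae_of_all _ hbd)
  refine (measureReal_lt_abs_le_integral_sq_div_sq hL2.integrable_sq ht).trans ?_
  gcongr
  simp_rw [mul_pow]
  rw [integral_const_mul]
  exact mul_le_mul_of_nonneg_left (integral_sq_sum_le_of_orthogonal s w hY hYB horth) (sq_nonneg _)

end OrthogonalSum

lemma sum_pow_succ_le_mul_sum {ι : Type*} {s : Finset ι} {k : ι → ℝ} {κ : ℝ}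
    (hk0 : ∀ i ∈ s, 0 ≤ k i) (hkκ : ∀ i ∈ s, k i ≤ κ) (e : ℕ) :
    ∑ i ∈ s, k i ^ (e + 1) ≤ κ ^ e * ∑ i ∈ s, k i := by
  rw [mul_sum]
  refine sum_le_sum fun i hi => ?_
  rw [pow_succ]
  exact mul_le_mul_of_nonneg_right (pow_le_pow_left₀ (hk0 i hi) (hkκ i hi) e) (hk0 i hi)

lemma sum_Ioc_sq_mul_le (k : ℕ → ℝ) (n : ℕ) :
    ∑ i ∈ Icc 1 n, ∑ j ∈ Ioc i n, (k i * k j) ^ 2 ≤ (∑ i ∈ Icc 1 n, k i ^ 2) ^ 2 := by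
  rw [sq (∑ i ∈ Icc 1 n, k i ^ 2), sum_mul_sum]
  refine sum_le_sum fun i hi => ?_
  simp only [← mul_pow]
  refine sum_le_sum_of_subset_of_nonneg (fun j hj => ?_) fun j _ _ => sq_nonneg _
  simp only [mem_Icc, mem_Ioc] at hi hj ⊢
  omega

lemma sq_one_div_two_mul_mul_sqrt {M σ2 : ℝ} (hM : 0 < M) (hσ2 : 0 < σ2) :
    (1 / (2 * M * √(σ2 / M))) ^ 2 = 1 / (4 * M * σ2) := by
  rw [div_pow, mul_pow, mul_pow, sq_sqrt (div_pos hσ2 hM).le]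
  field_simp
  ring

lemma rpow_neg_half_sq {x : ℝ} (hx : 0 < x) : (x ^ (-(1 / 2 : ℝ))) ^ 2 = x⁻¹ := by
  rw [← rpow_natCast, ← rpow_mul hx.le]
  norm_num [rpow_neg_one]

lemma div_div_sq_half_rpow_mul_rpow_log {x : ℝ} (hx : 1 < x) (D : ℝ) :
    (D / x) / (x ^ (-(3 / 8 : ℝ)) * log x ^ (-(1 / 2 : ℝ)) / 2) ^ 2
      = 4 * D * x ^ (-(1 / 4 : ℝ)) * log x := by
  have hx0 : 0 < x := by linarith
  have e1 : (x ^ (3 / 8 : ℝ)) ^ 2 = x * x ^ (-(1 / 4 : ℝ)) := by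
    rw [← rpow_natCast, ← rpow_mul hx0.le, ← rpow_one_add' hx0.le (by norm_num)]
    norm_num
  rw [rpow_neg hx0.le (3 / 8), div_pow, mul_pow, rpow_neg_half_sq (log_pos hx), inv_pow, e1]
  have : 0 < x ^ (-(1 / 4 : ℝ)) := by positivity
  field_simp
  ring

section DegreeWeights

variable {n : ℕ} {M C : ℝ} {k : ℕ → ℝ}

lemma sum_Ioc_sq_mul_div_le_of_degree_le (hn : 0 < n) (hM : 0 < M) (hk0 : ∀ i ∈ Icc 1 n, 0 ≤ k i)
    (hkC : ∀ i ∈ Icc 1 n, k i / √M ≤ C * (n : ℝ) ^ (-(1 / 2 : ℝ)))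
    (hsum : ∑ i ∈ Icc 1 n, k i = 2 * M) :
    ∑ i ∈ Icc 1 n, ∑ j ∈ Ioc i n, (k i * k j / M) ^ 2 ≤ 4 * C ^ 2 * M / n := by
  set κ := C * (n : ℝ) ^ (-(1 / 2 : ℝ)) * √M
  have hkκ : ∀ i ∈ Icc 1 n, k i ≤ κ := fun i hi =>
    (div_le_iff₀ (sqrt_pos.2 hM)).1 (hkC i hi)
  have hsq : ∑ i ∈ Icc 1 n, k i ^ 2 ≤ κ * (2 * M) := by
    simpa [hsum] using sum_pow_succ_le_mul_sum hk0 hkκ 1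
  calc ∑ i ∈ Icc 1 n, ∑ j ∈ Ioc i n, (k i * k j / M) ^ 2
      = (∑ i ∈ Icc 1 n, ∑ j ∈ Ioc i n, (k i * k j) ^ 2) / M ^ 2 := by
        simp only [div_pow, sum_div]
    _ ≤ (κ * (2 * M)) ^ 2 / M ^ 2 := by
        gcongr
        exact (sum_Ioc_sq_mul_le k n).trans
          (pow_le_pow_left₀ (sum_nonneg fun i _ => sq_nonneg _) hsq 2)
    _ = 4 * C ^ 2 * M / n := by
        rw [mul_pow, mul_pow, mul_pow, rpow_neg_half_sq (by positivity), sq_sqrt hM.le]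
        field_simp
        ring

lemma sum_sq_div_sq_le_of_degree_le (hn : 0 < n) (hM : 1 ≤ M) (hC : 0 ≤ C)
    (hk0 : ∀ i ∈ Icc 1 n, 0 ≤ k i)
    (hkC : ∀ i ∈ Icc 1 n, k i / √M ≤ C * (n : ℝ) ^ (-(1 / 2 : ℝ)))
    (hsum : ∑ i ∈ Icc 1 n, k i = 2 * M) :
    ∑ i ∈ Icc 1 n, (k i ^ 2 / M) ^ 2 ≤ 2 * C ^ 3 * M / n := by
  set r := (n : ℝ) ^ (-(1 / 2 : ℝ))
  have hM0 : 0 < M := by linarith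
  have hkκ : ∀ i ∈ Icc 1 n, k i ≤ C * r * √M := fun i hi =>
    (div_le_iff₀ (sqrt_pos.2 hM0)).1 (hkC i hi)
  have hr : r ≤ 1 := rpow_le_one_of_one_le_of_nonpos (by exact_mod_cast hn) (by norm_num)
  have hsqrtM : 1 ≤ √M := one_le_sqrt.2 hM
  have hκ3 : (C * r * √M) ^ 3 ≤ C ^ 3 * r ^ 2 * M ^ 2 := by
    have hr3 : r ^ 3 ≤ r ^ 2 := pow_le_pow_of_le_one (by positivity) hr (by norm_num)
    have hM3 : √M ^ 3 ≤ √M ^ 4 := pow_le_pow_right₀ hsqrtM (by norm_num)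
    calc (C * r * √M) ^ 3 = C ^ 3 * (r ^ 3 * √M ^ 3) := by ring
      _ ≤ C ^ 3 * (r ^ 2 * √M ^ 4) := by gcongr
      _ = C ^ 3 * r ^ 2 * M ^ 2 := by
        rw [show √M ^ 4 = (√M ^ 2) ^ 2 by ring, sq_sqrt hM0.le]
        ring
  calc ∑ i ∈ Icc 1 n, (k i ^ 2 / M) ^ 2 = (∑ i ∈ Icc 1 n, k i ^ (3 + 1)) / M ^ 2 := by
        simp only [div_pow, sum_div, ← pow_mul]
    _ ≤ (C * r * √M) ^ 3 * (2 * M) / M ^ 2 := by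
        gcongr
        exact hsum ▸ sum_pow_succ_le_mul_sum hk0 hkκ 3
    _ ≤ C ^ 3 * r ^ 2 * M ^ 2 * (2 * M) / M ^ 2 := by gcongr
    _ = 2 * C ^ 3 * M / n := by
        rw [rpow_neg_half_sq (by positivity)]
        field_simp

lemma normalized_sum_Ioc_sq_mul_div_le (hn : 0 < n) (hM : 0 < M) {σ2 : ℝ} (hσ2 : 0 < σ2)
    (hk0 : ∀ i ∈ Icc 1 n, 0 ≤ k i) (hkC : ∀ i ∈ Icc 1 n, k i / √M ≤ C * (n : ℝ) ^ (-(1 / 2 : ℝ)))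
    (hsum : ∑ i ∈ Icc 1 n, k i = 2 * M) :
    (1 / (2 * M * √(σ2 / M))) ^ 2 * (4 * ∑ i ∈ Icc 1 n, ∑ j ∈ Ioc i n, (k i * k j / M) ^ 2)
      ≤ 4 * C ^ 2 / σ2 / n := by
  rw [sq_one_div_two_mul_mul_sqrt hM hσ2]
  calc _ ≤ 1 / (4 * M * σ2) * (4 * (4 * C ^ 2 * M / n)) := by
        gcongr
        exact sum_Ioc_sq_mul_div_le_of_degree_le hn hM hk0 hkC hsum
    _ = _ := by field_simp

lemma normalized_sum_sq_div_sq_le (hn : 0 < n) (hM : 1 ≤ M) (hC : 0 ≤ C) {σ2 : ℝ} (hσ2 : 0 < σ2)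
    (hk0 : ∀ i ∈ Icc 1 n, 0 ≤ k i) (hkC : ∀ i ∈ Icc 1 n, k i / √M ≤ C * (n : ℝ) ^ (-(1 / 2 : ℝ)))
    (hsum : ∑ i ∈ Icc 1 n, k i = 2 * M) :
    (1 / (2 * M * √(σ2 / M))) ^ 2 * ∑ i ∈ Icc 1 n, (k i ^ 2 / M) ^ 2 ≤ C ^ 3 / 2 / σ2 / n := by
  rw [sq_one_div_two_mul_mul_sqrt (by linarith) hσ2]
  calc _ ≤ 1 / (4 * M * σ2) * (2 * C ^ 3 * M / n) := by
        gcongr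
        exact sum_sq_div_sq_le_of_degree_le hn hM hC hk0 hkC hsum
    _ = _ := by field_simp; ring

end DegreeWeights

structure IsIIDCategorical {Ω : Type*} [MeasurableSpace Ω] (μ : Measure Ω) (c : ℕ → Ω → ℕ)
    (K : ℕ) (p : ℕ → ℝ) : Prop where
  measurable : ∀ i, Measurable (c i)
  mem_Icc : ∀ i ω, c i ω ∈ Icc 1 K
  indep : iIndepFun c μ
  measure_eq : ∀ i, ∀ j ∈ Icc 1 K, μ {ω | c i ω = j} = ENNReal.ofReal (p j)
  -- `ENNReal.ofReal` truncates at `0`: without this, `measure_eq` would not determine `p j`.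
  nonneg : ∀ j ∈ Icc 1 K, 0 ≤ p j

def centeredIndicator (p : ℕ → ℝ) (t x : ℕ) : ℝ := (if x = t then 1 else 0) - p t

def centeredKernel (p : ℕ → ℝ) (p2 : ℝ) (x y : ℕ) : ℝ :=
  (if x = y then 1 else 0) - p x - p y + p2

section ProbabilityVector

variable {K : ℕ} {p : ℕ → ℝ} {p2 : ℝ}

lemma le_one_of_sum_eq_one (hp0 : ∀ j ∈ Icc 1 K, 0 ≤ p j) (hp1 : ∑ j ∈ Icc 1 K, p j = 1)
    {j : ℕ} (hj : j ∈ Icc 1 K) : p j ≤ 1 :=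
  hp1 ▸ single_le_sum hp0 hj

lemma sum_sq_mem_Icc (hp0 : ∀ j ∈ Icc 1 K, 0 ≤ p j) (hp1 : ∑ j ∈ Icc 1 K, p j = 1) :
    ∑ j ∈ Icc 1 K, p j ^ 2 ∈ Set.Icc 0 1 :=
  ⟨sum_nonneg fun _ _ => sq_nonneg _, hp1 ▸ sum_le_sum fun _ hj =>
    pow_le_of_le_one (hp0 _ hj) (le_one_of_sum_eq_one hp0 hp1 hj) two_ne_zero⟩

lemma sum_mul_centeredIndicator (hp1 : ∑ j ∈ Icc 1 K, p j = 1) {t : ℕ} (ht : t ∈ Icc 1 K) :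
    ∑ j ∈ Icc 1 K, p j * centeredIndicator p t j = 0 := by
  simp only [centeredIndicator, mul_sub, mul_ite, mul_one, mul_zero, sum_sub_distrib,
    sum_ite_eq', if_pos ht, ← sum_mul, hp1, one_mul, sub_self]

lemma abs_centeredIndicator_le {t : ℕ} (h0 : 0 ≤ p t) (h1 : p t ≤ 1) (x : ℕ) :
    |centeredIndicator p t x| ≤ 1 := by
  unfold centeredIndicator
  split_ifs <;> rw [abs_le] <;> constructor <;> linarith

lemma centeredKernel_eq_sum (hp2 : p2 = ∑ t ∈ Icc 1 K, p t ^ 2) {x y : ℕ}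
    (hx : x ∈ Icc 1 K) (hy : y ∈ Icc 1 K) :
    centeredKernel p p2 x y = ∑ t ∈ Icc 1 K, centeredIndicator p t x * centeredIndicator p t y := by
  have hterm : ∀ t, centeredIndicator p t x * centeredIndicator p t y
      = ((if x = t then (if y = t then 1 else 0) else 0) - (if x = t then p t else 0))
        - (if y = t then p t else 0) + p t ^ 2 := by
    intro t
    unfold centeredIndicator
    split_ifs <;> ring
  simp only [hterm, sum_add_distrib, sum_sub_distrib, sum_ite_eq, sum_ite_eq', if_pos hx, if_pos hy,
    ← hp2, centeredKernel, eq_comm (a := y)]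

lemma abs_centeredKernel_le {x y : ℕ} (hx0 : 0 ≤ p x) (hx1 : p x ≤ 1) (hy0 : 0 ≤ p y)
    (hy1 : p y ≤ 1) (h0 : 0 ≤ p2) (h1 : p2 ≤ 1) : |centeredKernel p p2 x y| ≤ 2 := by
  unfold centeredKernel
  split_ifs <;> rw [abs_le] <;> constructor <;> linarith

end ProbabilityVector

lemma exists_lone_index {i j i' j' : ℕ} (hij : i < j) (hij' : i' < j') (hne : (i, j) ≠ (i', j')) :
    ∃ a : Fin 4, ∀ b, ![i, j, i', j'] b = ![i, j, i', j'] a → b = a := by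
  have hne' : i = i' → j ≠ j' := fun h h' => hne (by rw [h, h'])
  by_cases hjj' : j = j'
  · exact ⟨0, fun b hb => by fin_cases b <;> simp at hb ⊢ <;> omega⟩
  by_cases hji' : j = i'
  · exact ⟨3, fun b hb => by fin_cases b <;> simp at hb ⊢ <;> omega⟩
  · exact ⟨1, fun b hb => by fin_cases b <;> simp at hb ⊢ <;> omega⟩

namespace IsIIDCategorical

variable {Ω : Type*} [MeasurableSpace Ω] {μ : Measure Ω} {c : ℕ → Ω → ℕ} {K : ℕ} {p : ℕ → ℝ}
  {p2 : ℝ}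

lemma integral_comp (hc : IsIIDCategorical μ c K p) (f : ℕ → ℝ) (i : ℕ) :
    ∫ ω, f (c i ω) ∂μ = ∑ j ∈ Icc 1 K, p j * f j := by
  have := hc.indep.isProbabilityMeasure
  have hlevel : ∀ j, MeasurableSet {ω | c i ω = j} := fun j =>
    hc.measurable i (measurableSet_singleton j)
  have hsplit : ∀ ω, f (c i ω) = ∑ j ∈ Icc 1 K, {ω | c i ω = j}.indicator (fun _ => f j) ω := by
    intro ω
    simp only [Set.indicator_apply, Set.mem_ofPred_eq, sum_ite_eq, if_pos (hc.mem_Icc i ω)]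
  simp_rw [hsplit]
  rw [integral_finsetSum _ fun j _ => (integrable_const (f j)).indicator (hlevel j)]
  refine sum_congr rfl fun j hj => ?_
  rw [integral_indicator_const _ (hlevel j), measureReal_def, hc.measure_eq i j hj,
    ENNReal.toReal_ofReal (hc.nonneg j hj), smul_eq_mul]

lemma integral_centeredIndicator (hc : IsIIDCategorical μ c K p) (hp1 : ∑ j ∈ Icc 1 K, p j = 1)
    {t : ℕ} (ht : t ∈ Icc 1 K) (i : ℕ) : ∫ ω, centeredIndicator p t (c i ω) ∂μ = 0 := by
  rw [hc.integral_comp, sum_mul_centeredIndicator hp1 ht]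

lemma integral_centeredKernel_mul_centeredKernel (hc : IsIIDCategorical μ c K p)
    (hp1 : ∑ j ∈ Icc 1 K, p j = 1) (hp2 : p2 = ∑ t ∈ Icc 1 K, p t ^ 2)
    {i j i' j' : ℕ} (hij : i < j) (hij' : i' < j') (hne : (i, j) ≠ (i', j')) :
    ∫ ω, centeredKernel p p2 (c i ω) (c j ω) * centeredKernel p p2 (c i' ω) (c j' ω) ∂μ = 0 := by
  have := hc.indep.isProbabilityMeasure
  obtain ⟨a, ha⟩ := exists_lone_index hij hij' hne
  set σ := ![i, j, i', j']
  set φ := centeredIndicator p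
  have hexpand : ∀ ω, centeredKernel p p2 (c i ω) (c j ω) * centeredKernel p p2 (c i' ω) (c j' ω)
      = ∑ t ∈ Icc 1 K, ∑ u ∈ Icc 1 K, ∏ b, ![φ t, φ t, φ u, φ u] b (c (σ b) ω) := by
    intro ω
    rw [centeredKernel_eq_sum hp2 (hc.mem_Icc i ω) (hc.mem_Icc j ω),
      centeredKernel_eq_sum hp2 (hc.mem_Icc i' ω) (hc.mem_Icc j' ω), sum_mul_sum]
    simp [Fin.prod_univ_four, σ, φ, mul_assoc]
  have hint : ∀ t ∈ Icc 1 K, ∀ u ∈ Icc 1 K,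
      Integrable (fun ω => ∏ b, ![φ t, φ t, φ u, φ u] b (c (σ b) ω)) μ := by
    intro t ht u hu
    refine Integrable.of_bound (Finset.measurable_prod _ fun b _ =>
      (measurable_of_countable _).comp (hc.measurable _)).aestronglyMeasurable 1
      (ae_of_all _ fun ω => ?_)
    rw [Real.norm_eq_abs, abs_prod]
    refine prod_le_one (fun b _ => abs_nonneg _) fun b _ => ?_
    fin_cases b <;>
      exact abs_centeredIndicator_le (hc.nonneg _ ‹_›) (le_one_of_sum_eq_one hc.nonneg hp1 ‹_›) _
  simp_rw [hexpand]
  rw [integral_finsetSum _ fun t ht => integrable_finsetSum _ (hint t ht)]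
  refine sum_eq_zero fun t ht => ?_
  rw [integral_finsetSum _ (hint t ht)]
  refine sum_eq_zero fun u hu => ?_
  refine hc.indep.integral_prod_comp_eq_zero hc.measurable univ σ
    (fun b => measurable_of_countable _) (mem_univ a) (fun b _ => ha b) ?_
  fin_cases a
  · exact hc.integral_centeredIndicator hp1 ht _
  · exact hc.integral_centeredIndicator hp1 ht _
  · exact hc.integral_centeredIndicator hp1 hu _
  · exact hc.integral_centeredIndicator hp1 hu _

lemma integral_sub_mul_sub (hc : IsIIDCategorical μ c K p) (hp1 : ∑ j ∈ Icc 1 K, p j = 1)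
    (hp2 : p2 = ∑ t ∈ Icc 1 K, p t ^ 2) {i j : ℕ} (hij : i ≠ j) :
    ∫ ω, (p (c i ω) - p2) * (p (c j ω) - p2) ∂μ = 0 := by
  have hmean : ∀ i, ∫ ω, (p (c i ω) - p2) ∂μ = 0 := fun i => by
    rw [hc.integral_comp (fun x => p x - p2), hp2]
    simp only [mul_sub, sum_sub_distrib, ← sum_mul, hp1, one_mul, sq, sub_self]
  have hpc : ∀ i, Measurable fun ω => p (c i ω) - p2 :=
    fun i => (measurable_of_countable (fun x => p x - p2)).comp (hc.measurable i)
  have h := ((hc.indep.indepFun hij).comp (measurable_of_countable (fun x => p x - p2))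
    (measurable_of_countable (fun x => p x - p2))).integral_fun_mul_eq_mul_integral
    (hpc i).aestronglyMeasurable (hpc j).aestronglyMeasurable
  simp only [Function.comp_apply] at h
  rw [h, hmean, zero_mul]

lemma measureReal_lt_abs_mul_sum_centeredKernel_le (hc : IsIIDCategorical μ c K p)
    (hp1 : ∑ j ∈ Icc 1 K, p j = 1) (hp2 : p2 = ∑ t ∈ Icc 1 K, p t ^ 2) (l : ℝ) (n : ℕ)
    (w : ℕ → ℕ → ℝ) {t : ℝ} (ht : 0 < t) :
    μ.real {ω | t < |l * ∑ i ∈ Icc 1 n, ∑ j ∈ Ioc i n, w i j * centeredKernel p p2 (c i ω) (c j ω)|}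
      ≤ l ^ 2 * (4 * ∑ i ∈ Icc 1 n, ∑ j ∈ Ioc i n, w i j ^ 2) / t ^ 2 := by
  have := hc.indep.isProbabilityMeasure
  obtain ⟨hp2_0, hp2_1⟩ : p2 ∈ Set.Icc 0 1 := hp2 ▸ sum_sq_mem_Icc hc.nonneg hp1
  have hp_le := fun j hj => le_one_of_sum_eq_one hc.nonneg hp1 (j := j) hj
  have h := measureReal_lt_abs_mul_sum_le_of_orthogonal (μ := μ) l
    ((Icc 1 n).sigma fun i => Ioc i n)
    (fun x => w x.1 x.2) (Y := fun x ω => centeredKernel p p2 (c x.1 ω) (c x.2 ω)) (B := 2)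
    (fun x _ => (measurable_of_countable fun y : ℕ × ℕ => centeredKernel p p2 y.1 y.2).comp
      ((hc.measurable x.1).prodMk (hc.measurable x.2)))
    (fun x _ ω => abs_centeredKernel_le (hc.nonneg _ (hc.mem_Icc _ ω)) (hp_le _ (hc.mem_Icc _ ω))
      (hc.nonneg _ (hc.mem_Icc _ ω)) (hp_le _ (hc.mem_Icc _ ω)) hp2_0 hp2_1)
    (fun x hx y hy hxy => hc.integral_centeredKernel_mul_centeredKernel hp1 hp2
      (mem_Ioc.1 (mem_sigma.1 hx).2).1 (mem_Ioc.1 (mem_sigma.1 hy).2).1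
      fun h => hxy (Sigma.ext (congrArg Prod.fst h) (heq_of_eq (congrArg Prod.snd h)))) ht
  norm_num only [sum_sigma] at h
  exact h

lemma measureReal_lt_abs_mul_sum_sub_le (hc : IsIIDCategorical μ c K p)
    (hp1 : ∑ j ∈ Icc 1 K, p j = 1) (hp2 : p2 = ∑ t ∈ Icc 1 K, p t ^ 2) (l : ℝ) (s : Finset ℕ)
    (w : ℕ → ℝ) {t : ℝ} (ht : 0 < t) :
    μ.real {ω | t < |l * ∑ i ∈ s, w i * (p (c i ω) - p2)|}
      ≤ l ^ 2 * (∑ i ∈ s, w i ^ 2) / t ^ 2 := by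
  have := hc.indep.isProbabilityMeasure
  obtain ⟨hp2_0, hp2_1⟩ : p2 ∈ Set.Icc 0 1 := hp2 ▸ sum_sq_mem_Icc hc.nonneg hp1
  have hbd : ∀ i ω, |p (c i ω) - p2| ≤ 1 := fun i ω => by
    have := hc.nonneg _ (hc.mem_Icc i ω)
    have := le_one_of_sum_eq_one hc.nonneg hp1 (hc.mem_Icc i ω)
    rw [abs_le]
    constructor <;> linarith
  simpa only [one_pow, one_mul] using measureReal_lt_abs_mul_sum_le_of_orthogonal l s w
    (Y := fun i ω => p (c i ω) - p2)
    (fun i _ => (measurable_of_countable fun x => p x - p2).comp (hc.measurable i))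
    (fun i _ => hbd i) (fun i _ j _ hij => hc.integral_sub_mul_sub hp1 hp2 hij) ht

end IsIIDCategorical

theorem remainder_terms_tail_bounds_general
    {Ω : Type*} [MeasureSpace Ω] [IsProbabilityMeasure (ℙ : Measure Ω)]
    (A : ℕ → ℕ → ℕ → ℝ) (m : ℕ → ℕ) (k : ℕ → ℕ → ℝ)
    (hA01 : ∀ n ≥ 2, ∀ i ∈ Icc 1 n, ∀ j ∈ Icc 1 n, A n i j = 0 ∨ A n i j = 1)
    (hm : ∀ n ≥ 2, 1 ≤ m n)
    (hk : ∀ n ≥ 2, ∀ i ∈ Icc 1 n, k n i = ∑ j ∈ Icc 1 n, A n i j)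
    (hksum : ∀ n ≥ 2, ∑ i ∈ Icc 1 n, k n i = 2 * (m n : ℝ))
    (K : ℕ) (p : ℕ → ℝ)
    (hp0 : ∀ j ∈ Icc 1 K, 0 ≤ p j) (hp1 : ∑ j ∈ Icc 1 K, p j = 1)
    (p2 p3 : ℝ)
    (hp2 : p2 = ∑ j ∈ Icc 1 K, (p j) ^ 2)
    (hpos : 0 < p2 + p2 ^ 2 - 2 * p3)
    (c : ℕ → Ω → ℕ)
    (hcmeas : ∀ i, Measurable (c i))
    (hcrange : ∀ i ω, c i ω ∈ Icc 1 K)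
    (hcindep : iIndepFun c ℙ)
    (hcdist : ∀ i, ∀ j ∈ Icc 1 K, (ℙ {ω | c i ω = j}) = ENNReal.ofReal (p j))
    (hbar : ℕ → ℕ → ℝ)
    (hhbar : ∀ x y, hbar x y = (if x = y then (1 : ℝ) else 0) - p x - p y + p2)
    (δ : ℕ → ℝ)
    (hδ : ∀ n, δ n = Real.sqrt ((p2 + p2 ^ 2 - 2 * p3) / (m n : ℝ)))
    (a : ℕ → ℝ)
    (ha : ∀ n, a n = (n : ℝ) ^ (-(3 / 8 : ℝ)) * (Real.log n) ^ (-(1 / 2 : ℝ)))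
    (C : ℝ) (hC : 0 < C)
    (hdeg : ∀ n ≥ 2, ∀ i ∈ Icc 1 n,
      k n i / Real.sqrt (m n) ≤ C * (n : ℝ) ^ (-(1 / 2 : ℝ))) :
    ∃ H > (0 : ℝ), ∀ n : ℕ, 2 ≤ n →
      (ℙ {ω | a n / 2 <
          |(1 / (2 * (m n : ℝ) * δ n)) * ∑ i ∈ Icc 1 n, ∑ j ∈ Ioc i n,
            (k n i * k n j / (m n : ℝ)) * hbar (c i ω) (c j ω)|}).toReal
        ≤ H * (n : ℝ) ^ (-(1 / 4 : ℝ)) * Real.log n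
      ∧ (ℙ {ω | a n / 2 <
          |(1 / (2 * (m n : ℝ) * δ n)) * ∑ i ∈ Icc 1 n,
            ((k n i) ^ 2 / (m n : ℝ)) * (p (c i ω) - p2)|}).toReal
        ≤ H * (n : ℝ) ^ (-(1 / 4 : ℝ)) * Real.log n := by
  obtain rfl : hbar = centeredKernel p p2 := funext fun x => funext (hhbar x)
  have hc : IsIIDCategorical ℙ c K p := ⟨hcmeas, hcrange, hcindep, hcdist, hp0⟩
  set σ2 := p2 + p2 ^ 2 - 2 * p3
  refine ⟨4 * (4 * C ^ 2 / σ2 + C ^ 3 / 2 / σ2), by positivity, fun n hn => ?_⟩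
  have hn1 : (1 : ℝ) < n := by exact_mod_cast hn
  have hM : (1 : ℝ) ≤ m n := by exact_mod_cast hm n hn
  have hk0 : ∀ i ∈ Icc 1 n, 0 ≤ k n i := fun i hi => by
    rw [hk n hn i hi]
    exact sum_nonneg fun j hj => (hA01 n hn i hi j hj).elim (·.ge) (·.symm ▸ zero_le_one)
  have ht : 0 < a n / 2 := by
    rw [ha]
    exact half_pos (mul_pos (by positivity) (rpow_pos_of_pos (log_pos hn1) _))
  have hrate := div_div_sq_half_rpow_mul_rpow_log hn1 (4 * C ^ 2 / σ2 + C ^ 3 / 2 / σ2)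
  rw [← ha n] at hrate
  rw [hδ n, ← hrate]
  constructor
  · refine (hc.measureReal_lt_abs_mul_sum_centeredKernel_le hp1 hp2 _ n _ ht).trans ?_
    gcongr
    refine (normalized_sum_Ioc_sq_mul_div_le (by omega) (by linarith) hpos hk0 (hdeg n hn)
      (hksum n hn)).trans ?_
    gcongr
    exact le_add_of_nonneg_right (by positivity)
  · refine (hc.measureReal_lt_abs_mul_sum_sub_le hp1 hp2 _ _ _ ht).trans ?_
    gcongr
    refine (normalized_sum_sq_div_sq_le (by omega) hM hC.le hpos hk0 (hdeg n hn)
      (hksum n hn)).trans ?_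
    gcongr
    exact le_add_of_nonneg_left (by positivity)

/-- Tail bounds for the remainder terms (equations (4.16) and (4.17)). -/
theorem remainder_terms_tail_bounds
    {Ω : Type*} [MeasureSpace Ω] [IsProbabilityMeasure (ℙ : Measure Ω)]
    (A : ℕ → ℕ → ℕ → ℝ) (m : ℕ → ℕ) (k : ℕ → ℕ → ℝ)
    (hA01 : ∀ n ≥ 2, ∀ i ∈ Icc 1 n, ∀ j ∈ Icc 1 n, A n i j = 0 ∨ A n i j = 1)
    (hAsymm : ∀ n ≥ 2, ∀ i ∈ Icc 1 n, ∀ j ∈ Icc 1 n, A n i j = A n j i)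
    (hAdiag : ∀ n ≥ 2, ∀ i ∈ Icc 1 n, A n i i = 0)
    (hm : ∀ n ≥ 2, 1 ≤ m n)
    (hk : ∀ n ≥ 2, ∀ i ∈ Icc 1 n, k n i = ∑ j ∈ Icc 1 n, A n i j)
    (hksum : ∀ n ≥ 2, ∑ i ∈ Icc 1 n, k n i = 2 * (m n : ℝ))
    (K : ℕ) (hK : 1 ≤ K) (p : ℕ → ℝ)
    (hp0 : ∀ j ∈ Icc 1 K, 0 ≤ p j) (hp1 : ∑ j ∈ Icc 1 K, p j = 1)
    (p2 p3 : ℝ)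
    (hp2 : p2 = ∑ j ∈ Icc 1 K, (p j) ^ 2) (hp3 : p3 = ∑ j ∈ Icc 1 K, (p j) ^ 3)
    (hpos : 0 < p2 + p2 ^ 2 - 2 * p3)
    (c : ℕ → Ω → ℕ)
    (hcmeas : ∀ i, Measurable (c i))
    (hcrange : ∀ i ω, c i ω ∈ Icc 1 K)
    (hcindep : iIndepFun c ℙ)
    (hcdist : ∀ i, ∀ j ∈ Icc 1 K, (ℙ {ω | c i ω = j}) = ENNReal.ofReal (p j))
    (hbar : ℕ → ℕ → ℝ)
    (hhbar : ∀ x y, hbar x y = (if x = y then (1 : ℝ) else 0) - p x - p y + p2)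
    (δ : ℕ → ℝ)
    (hδ : ∀ n, δ n = Real.sqrt ((p2 + p2 ^ 2 - 2 * p3) / (m n : ℝ)))
    (a : ℕ → ℝ)
    (ha : ∀ n, a n = (n : ℝ) ^ (-(3 / 8 : ℝ)) * (Real.log n) ^ (-(1 / 2 : ℝ)))
    (C : ℝ) (hC : 0 < C)
    (hdeg : ∀ n ≥ 2, ∀ i ∈ Icc 1 n,
      k n i / Real.sqrt (m n) ≤ C * (n : ℝ) ^ (-(1 / 2 : ℝ))) :
    ∃ H > (0 : ℝ), ∀ n : ℕ, 2 ≤ n →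
      (ℙ {ω | a n / 2 <
          |(1 / (2 * (m n : ℝ) * δ n)) * ∑ i ∈ Icc 1 n, ∑ j ∈ Ioc i n,
            (k n i * k n j / (m n : ℝ)) * hbar (c i ω) (c j ω)|}).toReal
        ≤ H * (n : ℝ) ^ (-(1 / 4 : ℝ)) * Real.log n
      ∧ (ℙ {ω | a n / 2 <
          |(1 / (2 * (m n : ℝ) * δ n)) * ∑ i ∈ Icc 1 n,
            ((k n i) ^ 2 / (m n : ℝ)) * (p (c i ω) - p2)|}).toReal
        ≤ H * (n : ℝ) ^ (-(1 / 4 : ℝ)) * Real.log n :=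
  remainder_terms_tail_bounds_general A m k hA01 hm hk hksum K p hp0 hp1 p2 p3 hp2 hpos c hcmeas
    hcrange hcindep hcdist hbar hhbar δ hδ a ha C hC hdeg
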